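/- Let k be a field, M ≥ 1, and R' := k[γ_1, …, γ_M]. Define α_n := h_n(γ_1, …, γ_M), the complete homogeneous symmetric polynomial of degree n. Then the radical of the Hankel pairing B_α on R'[x] is exactly the principal ideal generated by ∏_{j=1}^{M}(x − γ_j) = x^M − e_1(γ)x^{M−1} + ⋯ + (−1)^M e_M(γ), and the quotient A := R'[x]/rad(B_α) is a free R'-module of rank M with basis the images of 1, x, …, x^{M−1}. -/

import Mathlib

open MvPolynomial Finset

/-- The Hankel pairing associated to a sequence `α`:
`B_α(xᵃ, xᵇ) = α_{a+b}`, i.e. `B_α(f,g) = ∑ₙ (fg)ₙ αₙ`. -/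
noncomputable def hankelPair {R : Type*} [CommRing R] (α : ℕ → R) (f g : Polynomial R) : R :=
  (f * g).sum fun n c => c * α n

/-- The radical of the Hankel pairing `B_α`, as an ideal of `R[x]`. -/
noncomputable def hankelRadical {R : Type*} [CommRing R] (α : ℕ → R) : Ideal (Polynomial R) where
  carrier := {f | ∀ g, hankelPair α f g = 0}
  zero_mem' := by
    intro g
    simp [hankelPair]
  add_mem' := by
    intro a b ha hb g
    have h : (a + b) * g = a * g + b * g := add_mul a b g
    simp only [hankelPair, Set.mem_setOf_eq] at ha hb ⊢
    rw [h, Polynomial.sum_add_index (a * g) (b * g) _ (fun i => by simp)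
      (fun i b₁ b₂ => by ring), ha g, hb g, add_zero]
  smul_mem' := by
    intro c f hf g
    simp only [hankelPair, smul_eq_mul, Set.mem_setOf_eq] at hf ⊢
    have h : c * f * g = f * (c * g) := by ring
    rw [h]
    exact hf (c * g)

/-!
Let `H = ∑ hₙ tⁿ = ∏ⱼ (1 - γⱼ t)⁻¹`. For `deg f ≤ d`, the value `B_α(f, xᵐ)` is the coefficient of
`t^(d + m)` in `t^d f(1/t) · H`. The reversal of `P = ∏ⱼ (x - γⱼ)` is `∏ⱼ (1 - γⱼ t) = H⁻¹`, so
`B_α(P, xᵐ)` is a coefficient of `1` in positive degree and `P` lies in the radical. Conversely, if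
`r` is in the radical and `deg r < M` (a remainder modulo `P`), then `s = rev(r) · H` is a
polynomial, so `rev(r) = ∏ⱼ (1 - γⱼ t) · s` has degree at least `M` unless `s = 0`; hence `r = 0`.
As `P` is monic, `R'[x]/(P)` has the basis `1, x, …, x^(M-1)`.
-/

open scoped Polynomial PowerSeries

namespace Polynomial

section Hankel

variable {R : Type*} [CommRing R] (α : ℕ → R)

noncomputable def hankelFunctional : R[X] →ₗ[R] R :=
  lsum fun n => LinearMap.mulRight R (α n)

theorem hankelPair_eq_hankelFunctional (f g : R[X]) :
    hankelPair α f g = hankelFunctional α (f * g) :=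
  rfl

theorem hankelFunctional_C_mul_X_pow (c : R) (n : ℕ) :
    hankelFunctional α (C c * X ^ n) = c * α n := by
  rw [hankelFunctional, lsum_apply, C_mul_X_pow_eq_monomial,
    sum_monomial_index _ _ (map_zero (LinearMap.mulRight R (α n)))]
  rfl

theorem mem_hankelRadical_iff {f : R[X]} :
    f ∈ hankelRadical α ↔ ∀ m : ℕ, hankelFunctional α (f * X ^ m) = 0 := by
  refine ⟨fun hf m => hf (X ^ m), fun hf g => ?_⟩
  rw [hankelPair_eq_hankelFunctional]
  induction g using Polynomial.induction_on' with
  | add p q hp hq => rw [mul_add, map_add, hp, hq, add_zero]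
  | monomial n c =>
    rw [← C_mul_X_pow_eq_monomial, mul_left_comm, ← smul_eq_C_mul, map_smul, hf, smul_zero]

theorem hankelFunctional_mul_X_pow (f : R[X]) {d : ℕ} (hf : f.natDegree ≤ d) (m : ℕ) :
    hankelFunctional α (f * X ^ m) =
      PowerSeries.coeff (d + m) ((f.reflect d : R⟦X⟧) * PowerSeries.mk α) := by
  revert f
  refine induction_with_natDegree_le _ d ?_ (fun n c _ hn => ?_) (fun f g _ _ hf hg => ?_)
  · simp
  · rw [mul_assoc, ← pow_add, hankelFunctional_C_mul_X_pow, reflect_C_mul_X_pow, revAt_le hn,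
      coe_mul, coe_C, coe_pow, coe_X, mul_assoc, PowerSeries.coeff_C_mul,
      PowerSeries.coeff_X_pow_mul', if_pos (by omega), PowerSeries.coeff_mk]
    congr 2
    omega
  · rw [add_mul, map_add, hf, hg, reflect_add, coe_add, add_mul, map_add]

theorem mem_hankelRadical_of_reverse_mul_eq_one {P : R[X]} (hP : 0 < P.natDegree)
    (hPα : (P.reverse : R⟦X⟧) * PowerSeries.mk α = 1) : P ∈ hankelRadical α := by
  refine (mem_hankelRadical_iff α).2 fun m => ?_
  rw [hankelFunctional_mul_X_pow α _ le_rfl, ← reverse, hPα, PowerSeries.coeff_one,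
    if_neg (by omega)]

theorem eq_zero_of_natDegree_lt_of_coe_mul_eq_coe [NoZeroDivisors R] {E w s : R[X]} {H : R⟦X⟧}
    (hE : (E : R⟦X⟧) * H = 1) (hw : w.natDegree < E.natDegree) (hs : (w : R⟦X⟧) * H = s) :
    w = 0 := by
  have hwE : w = E * s := by
    refine coe_inj.1 ?_
    calc (w : R⟦X⟧) = w * (E * H) := by rw [hE, mul_one]
      _ = E * (w * H) := by ring
      _ = ↑(E * s) := by rw [hs, coe_mul]
  by_contra hw0
  have hs0 : s ≠ 0 := by rintro rfl; exact hw0 (by simpa using hwE)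
  have hE0 : E ≠ 0 := by rintro rfl; simp at hw
  have hdeg := natDegree_mul hE0 hs0
  rw [← hwE] at hdeg
  omega

theorem eq_zero_of_mem_hankelRadical [NoZeroDivisors R] {E r : R[X]}
    (hE : (E : R⟦X⟧) * PowerSeries.mk α = 1) (hr : r ∈ hankelRadical α)
    (hdeg : r.natDegree < E.natDegree) : r = 0 := by
  have hpoly : (r.reverse : R⟦X⟧) * PowerSeries.mk α =
      ((PowerSeries.trunc r.natDegree (r.reverse * PowerSeries.mk α) : R[X]) : R⟦X⟧) := by
    ext n
    rw [coeff_coe, PowerSeries.coeff_trunc]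
    split_ifs with hn
    · rfl
    obtain ⟨m, rfl⟩ := Nat.exists_eq_add_of_le (not_lt.1 hn)
    rw [reverse, ← hankelFunctional_mul_X_pow α _ le_rfl]
    exact (mem_hankelRadical_iff α).1 hr m
  exact reverse_eq_zero.1 <|
    eq_zero_of_natDegree_lt_of_coe_mul_eq_coe hE ((reverse_natDegree_le r).trans_lt hdeg) hpoly

theorem hankelRadical_eq_span_of_reverse_mul_eq_one [NoZeroDivisors R] {P : R[X]}
    (hmonic : P.Monic) (hdeg : 0 < P.natDegree) (hP0 : P.coeff 0 ≠ 0)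
    (hPα : (P.reverse : R⟦X⟧) * PowerSeries.mk α = 1) :
    hankelRadical α = Ideal.span {P} := by
  have hP := mem_hankelRadical_of_reverse_mul_eq_one α hdeg hPα
  refine le_antisymm (fun f hf => ?_) ((Ideal.span_singleton_le_iff_mem _).2 hP)
  have hr : f %ₘ P ∈ hankelRadical α := by
    rw [modByMonic_eq_sub_mul_div]
    exact sub_mem hf (Ideal.mul_mem_right _ _ hP)
  have hPrev : P.reverse.natDegree = P.natDegree := by
    rw [reverse_natDegree, natTrailingDegree_eq_zero.2 (Or.inr hP0), Nat.sub_zero]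
  have hdeg' : (f %ₘ P).natDegree < P.reverse.natDegree := by
    rw [hPrev]
    exact natDegree_modByMonic_lt f hmonic (by rintro rfl; simp at hdeg)
  exact Ideal.mem_span_singleton.2 <|
    (modByMonic_eq_zero_iff_dvd hmonic).1 (eq_zero_of_mem_hankelRadical α hPα hr hdeg')

end Hankel

theorem exists_basis_quotient_span_monic {R : Type*} [CommRing R] {P : R[X]} (hP : P.Monic)
    {n : ℕ} (hn : P.natDegree = n) :
    ∃ b : Module.Basis (Fin n) R (R[X] ⧸ Ideal.span {P}),
      ∀ i, b i = Ideal.Quotient.mk _ (X ^ (i : ℕ)) := by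
  subst hn
  refine ⟨(AdjoinRoot.powerBasis' hP).basis, fun i => ?_⟩
  exact ((AdjoinRoot.powerBasis' hP).basis_eq_pow i).trans (map_pow _ X i).symm

theorem reverse_prod_X_sub_C {R ι : Type*} [CommRing R] (s : Finset ι) (a : ι → R) :
    (∏ i ∈ s, (X - C (a i))).reverse = ∏ i ∈ s, (1 - C (a i) * X) := by
  nontriviality R
  classical
  induction s using Finset.induction_on with
  | empty => rw [prod_empty, prod_empty, ← C_1, reverse_C]
  | insert i s hi ih =>
    have hX : (X : R[X]).reverse = 1 := by rw [← one_mul X, reverse_mul_X, ← C_1, reverse_C]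
    rw [prod_insert hi, prod_insert hi, reverse_mul, ih, sub_eq_add_neg, ← C_neg, reverse_add_C,
      hX, natDegree_X, pow_one, C_neg, neg_mul, ← sub_eq_add_neg]
    rw [(monic_X_sub_C _).leadingCoeff,
      (monic_prod_of_monic _ _ fun j _ => monic_X_sub_C (a j)).leadingCoeff, one_mul]
    exact one_ne_zero

end Polynomial

theorem PowerSeries.one_sub_C_mul_X_mul_mk_pow {R : Type*} [CommRing R] (a : R) :
    (1 - C a * X) * mk (a ^ ·) = 1 := by
  simpa [rescale_mk, rescale_X, mul_comm] using
    congrArg (rescale a) (mk_one_mul_one_sub_eq_one (S := R))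

namespace MvPolynomial

variable (σ R : Type*) [Fintype σ] [CommRing R]

theorem hsymm_eq_coeff_prod [DecidableEq σ] (n : ℕ) :
    hsymm σ R n = PowerSeries.coeff n (∏ j, PowerSeries.mk ((X j : MvPolynomial σ R) ^ ·)) := by
  let e : Sym σ n ≃ finsuppAntidiag univ n := (Sym.equivNatSum σ n).trans <|
    Equiv.subtypeEquivRight fun l => by simp [mem_finsuppAntidiag, Finsupp.sum_fintype]
  rw [PowerSeries.coeff_prod, hsymm, ← Finset.sum_coe_sort (finsuppAntidiag univ n)]
  refine Fintype.sum_equiv e _ _ fun s => ?_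
  rw [Finset.prod_multiset_map_count, Finset.prod_subset (subset_univ _)]
  · simp [e]
  · intro j _ hj
    rw [Multiset.count_eq_zero.2 (by simpa using hj), pow_zero]

theorem prod_one_sub_C_X_mul_mk_hsymm [DecidableEq σ] :
    ((∏ j, (1 - Polynomial.C (X j) * Polynomial.X) : (MvPolynomial σ R)[X]) : PowerSeries _) *
      PowerSeries.mk (hsymm σ R) = 1 := by
  have hH : PowerSeries.mk (hsymm σ R) = ∏ j, PowerSeries.mk ((X j : MvPolynomial σ R) ^ ·) :=
    PowerSeries.ext fun n => by rw [PowerSeries.coeff_mk, hsymm_eq_coeff_prod]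
  rw [hH, ← Polynomial.coeToPowerSeries.ringHom_apply, map_prod, ← prod_mul_distrib]
  refine Finset.prod_eq_one fun j _ => ?_
  simpa using PowerSeries.one_sub_C_mul_X_mul_mk_pow (X j : MvPolynomial σ R)

theorem prod_X_sub_C_eq_sum_esymm :
    ∏ j : σ, (Polynomial.X - Polynomial.C (X j : MvPolynomial σ R)) =
      ∑ i ∈ range (Fintype.card σ + 1),
        (-1) ^ i * Polynomial.C (esymm σ R i) * Polynomial.X ^ (Fintype.card σ - i) := by
  have hcard : Fintype.card σ = Multiset.card (univ.val.map (X : σ → MvPolynomial σ R)) := by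
    simp
  simp_rw [hcard, esymm_eq_multiset_esymm, prod_eq_multiset_prod, mul_assoc]
  rw [← Multiset.prod_X_sub_X_eq_sum_esymm, Multiset.map_map]
  rfl

theorem coeff_zero_prod_X_sub_C_ne_zero [IsDomain R] :
    (∏ j : σ, (Polynomial.X - Polynomial.C (X j : MvPolynomial σ R))).coeff 0 ≠ 0 := by
  rw [Polynomial.coeff_zero_eq_eval_zero, Polynomial.eval_prod, prod_ne_zero_iff]
  intro j _
  simp [X_ne_zero]

end MvPolynomial

/-- Let `k` be a field, `M ≥ 1`, `R' = k[γ₁,…,γ_M]`, and `αₙ := hₙ(γ₁,…,γ_M)` the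
complete homogeneous symmetric polynomials.  Then the radical of the Hankel
pairing `B_α` on `R'[x]` is exactly the principal ideal generated by
`∏ⱼ (x − γⱼ) = x^M − e₁(γ)x^{M−1} + ⋯ + (−1)^M e_M(γ)`, and the quotient
`A = R'[x]/rad(B_α)` is a free `R'`-module of rank `M` with basis the images of
`1, x, …, x^{M−1}`. -/
theorem hankel_radical_of_hsymm_and_quotient_free
    (k : Type*) [Field k] (M : ℕ) (hM : 1 ≤ M) :
    hankelRadical (fun n => (hsymm (Fin M) k n : MvPolynomial (Fin M) k)) =
      Ideal.span {∏ j : Fin M,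
        (Polynomial.X - Polynomial.C (X j : MvPolynomial (Fin M) k))}
    ∧ (∏ j : Fin M, (Polynomial.X - Polynomial.C (X j : MvPolynomial (Fin M) k))) =
        ∑ i ∈ Finset.range (M + 1),
          (-1 : Polynomial (MvPolynomial (Fin M) k)) ^ i *
            Polynomial.C (esymm (Fin M) k i) * Polynomial.X ^ (M - i)
    ∧ ∃ b : Module.Basis (Fin M) (MvPolynomial (Fin M) k)
        (Polynomial (MvPolynomial (Fin M) k) ⧸
          hankelRadical (fun n => (hsymm (Fin M) k n : MvPolynomial (Fin M) k))),
      ∀ i : Fin M,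
        b i = Ideal.Quotient.mk
          (hankelRadical (fun n => (hsymm (Fin M) k n : MvPolynomial (Fin M) k)))
          (Polynomial.X ^ (i : ℕ)) := by
  set P := ∏ j : Fin M, (Polynomial.X - Polynomial.C (X j : MvPolynomial (Fin M) k))
  have hmonic : P.Monic := Polynomial.monic_prod_of_monic _ _ fun j _ => Polynomial.monic_X_sub_C _
  have hdeg : P.natDegree = M := by simp [P]
  have hrad : hankelRadical (fun n => hsymm (Fin M) k n) = Ideal.span {P} :=
    Polynomial.hankelRadical_eq_span_of_reverse_mul_eq_one _ hmonic (by omega)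
      (coeff_zero_prod_X_sub_C_ne_zero _ _)
      (by rw [Polynomial.reverse_prod_X_sub_C]; exact prod_one_sub_C_X_mul_mk_hsymm _ _)
  refine ⟨hrad, by simpa using prod_X_sub_C_eq_sum_esymm (Fin M) k, ?_⟩
  rw [hrad]
  exact Polynomial.exists_basis_quotient_span_monic hmonic hdeg
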